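/- The superextension λ(L₁⊔C₂) of the semigroup L₁⊔C₂ is isomorphic to the semigroup L₁⊔L₁⊔C₂. -/

import Mathlib

open Set

/-- An *upfamily* on `X`: a nonempty family of nonempty subsets of `X`
that is closed under taking supersets. -/
def IsUpfamily {X : Type*} (F : Set (Set X)) : Prop :=
  F.Nonempty ∧ (∀ A ∈ F, A.Nonempty) ∧ ∀ A ∈ F, ∀ B : Set X, A ⊆ B → B ∈ F

/-- The space `υ(X)` of upfamilies on `X`. -/
def Upfamily (X : Type*) : Type _ := {F : Set (Set X) // IsUpfamily F}

/-- The extension of the binary operation of `X` to families of subsets of `X`: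
`𝓐*𝓑 = ⟨⋃_{a ∈ A} a*B_a : A ∈ 𝓐, {B_a}_{a∈A} ⊆ 𝓑⟩`. -/
def upMul {X : Type*} [Mul X] (F G : Set (Set X)) : Set (Set X) :=
  {C | ∃ A ∈ F, ∃ B : X → Set X, (∀ a ∈ A, B a ∈ G) ∧ (⋃ a ∈ A, (fun y => a * y) '' B a) ⊆ C}

theorem IsUpfamily.upMul {X : Type*} [Mul X] {F G : Set (Set X)}
    (hF : IsUpfamily F) (hG : IsUpfamily G) : IsUpfamily (upMul F G) := by
  obtain ⟨⟨A0, hA0⟩, hFne, hFup⟩ := hF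
  obtain ⟨⟨B0, hB0⟩, hGne, hGup⟩ := hG
  refine ⟨⟨univ, A0, hA0, fun _ => B0, fun a _ => hB0, subset_univ _⟩, ?_, ?_⟩
  · rintro C ⟨A, hA, B, hB, hsub⟩
    obtain ⟨a, ha⟩ := hFne A hA
    obtain ⟨b, hb⟩ := hGne (B a) (hB a ha)
    exact ⟨a * b, hsub (mem_biUnion ha ⟨b, hb, rfl⟩)⟩
  · rintro C ⟨A, hA, B, hB, hsub⟩ D hCD
    exact ⟨A, hA, B, hB, hsub.trans hCD⟩

/-- `υ(X)` is a semigroup under the extended operation. -/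
instance {X : Type*} [Mul X] : Mul (Upfamily X) :=
  ⟨fun F G => ⟨upMul F.1 G.1, F.2.upMul G.2⟩⟩

/-- The embedding `X → υ(X)`, `x ↦ ⟨x⟩ = {A ⊆ X : x ∈ A}`. -/
def Upfamily.principal {X : Type*} (x : X) : Upfamily X :=
  ⟨{A | x ∈ A}, ⟨univ, mem_univ x⟩, fun A hA => ⟨x, hA⟩, fun _ hA _ hAB => hAB hA⟩

/-- An upfamily is linked if any two of its members intersect. -/
def Upfamily.Linked {X : Type*} (F : Upfamily X) : Prop :=
  ∀ A ∈ F.1, ∀ B ∈ F.1, (A ∩ B).Nonempty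

/-- Maximal linked upfamilies. -/
def Upfamily.IsMaxLinked {X : Type*} (F : Upfamily X) : Prop :=
  F.Linked ∧ ∀ G : Upfamily X, G.Linked → F.1 ⊆ G.1 → F = G

/-- Filters: upfamilies closed under binary intersections. -/
def Upfamily.IsFilter {X : Type*} (F : Upfamily X) : Prop :=
  ∀ A ∈ F.1, ∀ B ∈ F.1, A ∩ B ∈ F.1

/-- Ultrafilters: maximal filters. -/
def Upfamily.IsUltrafilter {X : Type*} (F : Upfamily X) : Prop :=
  F.IsFilter ∧ ∀ G : Upfamily X, G.IsFilter → F.1 ⊆ G.1 → F = G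

/-- The superextension `λ(X)` of maximal linked upfamilies. -/
def lambdaS (X : Type*) : Set (Upfamily X) := {F | F.IsMaxLinked}

/-- The semigroup `N₂(X)` of linked upfamilies. -/
def N2S (X : Type*) : Set (Upfamily X) := {F | F.Linked}

/-- The semigroup `φ(X)` of filters. -/
def phiS (X : Type*) : Set (Upfamily X) := {F | F.IsFilter}

/-- The Stone-Čech extension `β(X)` of ultrafilters. -/
def betaS (X : Type*) : Set (Upfamily X) := {F | F.IsUltrafilter}

section SemigroupProps

variable {M : Type*} [Mul M]

/-- A subset closed under multiplication (i.e. a subsemigroup). -/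
def mulClosed (S : Set M) : Prop := ∀ a ∈ S, ∀ b ∈ S, a * b ∈ S

/-- The operation is commutative on `S`. -/
def commOn (S : Set M) : Prop := ∀ a ∈ S, ∀ b ∈ S, a * b = b * a

/-- The idempotents of `S` commute. -/
def idemCommOn (S : Set M) : Prop :=
  ∀ a ∈ S, ∀ b ∈ S, a * a = a → b * b = b → a * b = b * a

/-- `S` is an inverse semigroup: every element has a unique inverse in `S`. -/
def inverseOn (S : Set M) : Prop :=
  ∀ a ∈ S, ∃! b, b ∈ S ∧ a * b * a = a ∧ b * a * b = b

/-- `H` is a subgroup of the ambient multiplicative structure: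
it is closed under multiplication and carries a group structure. -/
def IsSubgroupIn (H : Set M) : Prop :=
  (∀ a ∈ H, ∀ b ∈ H, a * b ∈ H) ∧
    ∃ e ∈ H, (∀ a ∈ H, e * a = a ∧ a * e = a) ∧ ∀ a ∈ H, ∃ b ∈ H, a * b = e ∧ b * a = e

/-- `S` is a Clifford semigroup: a union of groups. -/
def cliffordOn (S : Set M) : Prop := ∀ a ∈ S, ∃ H ⊆ S, IsSubgroupIn H ∧ a ∈ H

/-- `S` is regular in `T`: every `a ∈ S` satisfies `a ∈ a T a`. -/
def regularIn (S T : Set M) : Prop := ∀ a ∈ S, ∃ b ∈ T, a * b * a = a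

/-- `ppow a n = a^(n+1)`: positive powers in a semigroup. -/
def ppow (a : M) : ℕ → M
  | 0 => a
  | n + 1 => ppow a n * a

/-- `S` is sub-Clifford: `x^{n+1} = x^{m+1}` implies `x^n = x^m` for positive `n < m`. -/
def subCliffordOn (S : Set M) : Prop :=
  ∀ a ∈ S, ∀ n m : ℕ, n < m → ppow a (n + 1) = ppow a (m + 1) → ppow a n = ppow a m

end SemigroupProps

/-- The cyclic group `Cₙ` of order `n`. -/
abbrev Cgrp (n : ℕ) : Type := Multiplicative (ZMod n)

/-- The linear semilattice `Lₙ = {0,…,n-1}` with the operation of minimum. -/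
def L (n : ℕ) : Type := Fin n

instance {n : ℕ} : Mul (L n) :=
  ⟨fun a b => show Fin n from min (show Fin n from a) (show Fin n from b)⟩

/-- The disjoint ordered union `X ⊔ Y` of two semigroups, in which
`x * y = y * x = x` for `x ∈ X` and `y ∈ Y`. -/
abbrev OSum (A B : Type*) : Type _ := A ⊕ B

instance {A B : Type*} [Mul A] [Mul B] : Mul (OSum A B) :=
  ⟨fun x y =>
    match x, y with
    | Sum.inl a, Sum.inl a' => Sum.inl (a * a')
    | Sum.inl a, Sum.inr _ => Sum.inl a
    | Sum.inr _, Sum.inl a => Sum.inl a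
    | Sum.inr b, Sum.inr b' => Sum.inr (b * b')⟩

/-- `M` is isomorphic to the sub-semigroup `S` of `N`: there is an injective
operation-preserving map of `M` onto `S`. -/
def MulIsoOnto (M : Type*) [Mul M] {N : Type*} [Mul N] (S : Set N) : Prop :=
  ∃ f : M → N, Function.Injective f ∧ Set.range f = S ∧ ∀ x y : M, f (x * y) = f x * f y

/-!
On a space with at most three points two sets with at least two points each must meet, so a
maximal linked upfamily either contains a singleton, and is then principal, or is the family
`nontrivialSets` of all sets with at least two points. Hence `λ(L₁ ⊔ C₂)` consists of the three
principal ultrafilters and `nontrivialSets`. Since `𝓐 * 𝓑` is determined by the preimages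
`(a * ·)⁻¹ C`, the elements of `C₂`, whose translations are bijective, fix `nontrivialSets` on
both sides, `nontrivialSets` is idempotent, and the zero of `L₁` still absorbs everything:
`nontrivialSets` is a second copy of `L₁` between the zero and the group.
-/

theorem Function.Bijective.nontrivial_preimage_iff {α β : Type*} {f : α → β}
    (hf : Function.Bijective f) {C : Set β} : (f ⁻¹' C).Nontrivial ↔ C.Nontrivial :=
  ⟨fun h => image_preimage_eq C hf.2 ▸ h.image hf.1, fun h => h.preimage hf.2⟩

namespace Upfamily

variable {X : Type*}

@[ext]
theorem ext {F G : Upfamily X} (h : ∀ A, A ∈ F.1 ↔ A ∈ G.1) : F = G :=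
  Subtype.ext (Set.ext h)

theorem mem_of_superset (F : Upfamily X) {A B : Set X} (hA : A ∈ F.1) (hAB : A ⊆ B) : B ∈ F.1 :=
  F.2.2.2 A hA B hAB

theorem nonempty_of_mem (F : Upfamily X) {A : Set X} (hA : A ∈ F.1) : A.Nonempty :=
  F.2.2.1 A hA

theorem univ_mem (F : Upfamily X) : univ ∈ F.1 :=
  let ⟨_, hA⟩ := F.2.1
  F.mem_of_superset hA (subset_univ _)

theorem mem_principal {x : X} {A : Set X} : A ∈ (principal x).1 ↔ x ∈ A :=
  Iff.rfl

theorem principal_injective : Function.Injective (principal : X → Upfamily X) := fun x y h => by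
  have hx : ({x} : Set X) ∈ (principal y).1 := h ▸ mem_principal.2 rfl
  exact (mem_principal.1 hx).symm

theorem principal_linked (x : X) : (principal x).Linked :=
  fun _ hA _ hB => ⟨x, hA, hB⟩

theorem Linked.subset_principal {F : Upfamily X} (hF : F.Linked) {x : X} (hx : {x} ∈ F.1) :
    F.1 ⊆ (principal x).1 := fun A hA => by
  obtain ⟨y, hyA, rfl⟩ := hF A hA {x} hx
  exact hyA

theorem principal_isMaxLinked (x : X) : (principal x).IsMaxLinked :=
  ⟨principal_linked x, fun _ hG hxG =>
    Subtype.ext ((hG.subset_principal (hxG rfl)).antisymm' hxG)⟩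

theorem IsMaxLinked.eq_principal {F : Upfamily X} (hF : F.IsMaxLinked) {x : X}
    (hx : {x} ∈ F.1) : F = principal x :=
  hF.2 _ (principal_linked x) (hF.1.subset_principal hx)

section Mul

variable [Mul X]

/-- The families `B_a` in the definition of `𝓐 * 𝓑` may always be taken to be the largest
possible ones, `B_a = (a * ·)⁻¹ C`. -/
theorem mem_mul {F G : Upfamily X} {C : Set X} :
    C ∈ (F * G).1 ↔ ∃ A ∈ F.1, ∀ a ∈ A, (a * ·) ⁻¹' C ∈ G.1 := by
  constructor
  · rintro ⟨A, hA, B, hB, hBC⟩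
    exact ⟨A, hA, fun a ha =>
      G.mem_of_superset (hB a ha) fun b hb => hBC (mem_biUnion ha (mem_image_of_mem _ hb))⟩
  · rintro ⟨A, hA, hAC⟩
    refine ⟨A, hA, fun a => (a * ·) ⁻¹' C, hAC, ?_⟩
    simp only [iUnion_subset_iff]
    exact fun a _ => image_preimage_subset _ _

theorem mem_principal_mul {x : X} {G : Upfamily X} {C : Set X} :
    C ∈ (principal x * G).1 ↔ (x * ·) ⁻¹' C ∈ G.1 := by
  rw [mem_mul]
  constructor
  · rintro ⟨A, hxA, hAC⟩
    exact hAC x hxA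
  · intro hC
    refine ⟨{x}, rfl, ?_⟩
    rintro a rfl
    exact hC

theorem mem_mul_principal {F : Upfamily X} {y : X} {C : Set X} :
    C ∈ (F * principal y).1 ↔ (· * y) ⁻¹' C ∈ F.1 := by
  rw [mem_mul]
  constructor
  · rintro ⟨A, hA, hAC⟩
    exact F.mem_of_superset hA hAC
  · exact fun hC => ⟨_, hC, fun _ ha => ha⟩

theorem principal_mul_principal (x y : X) : principal x * principal y = principal (x * y) := by
  ext C
  exact mem_principal_mul

theorem principal_mul_of_forall_mul_eq {c : X} (hc : ∀ w, c * w = c) (F : Upfamily X) :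
    principal c * F = principal c := by
  ext C
  rw [mem_principal_mul, mem_principal]
  constructor
  · intro hC
    obtain ⟨w, hw⟩ := F.nonempty_of_mem hC
    simpa only [mem_preimage, hc] using hw
  · intro hcC
    exact F.mem_of_superset F.univ_mem fun w _ => show c * w ∈ C from (hc w).symm ▸ hcC

theorem mul_principal_of_forall_mul_eq {c : X} (hc : ∀ w, w * c = c) (F : Upfamily X) :
    F * principal c = principal c := by
  ext C
  rw [mem_mul_principal, mem_principal]
  constructor
  · intro hC
    obtain ⟨w, hw⟩ := F.nonempty_of_mem hC
    simpa only [mem_preimage, hc] using hw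
  · intro hcC
    exact F.mem_of_superset F.univ_mem fun w _ => show w * c ∈ C from (hc w).symm ▸ hcC

end Mul

section NontrivialSets

variable [Nontrivial X]

def nontrivialSets : Upfamily X :=
  ⟨{A | A.Nontrivial}, ⟨univ, nontrivial_univ⟩, fun _ hA => hA.nonempty,
    fun _ hA _ hAB => hA.mono hAB⟩

theorem principal_ne_nontrivialSets (x : X) : principal x ≠ nontrivialSets := by
  intro h
  have hx : ({x} : Set X) ∈ (nontrivialSets : Upfamily X).1 := h ▸ mem_principal.2 rfl
  exact not_nontrivial_singleton hx

/-- Two disjoint sets with at least two points each need four points. -/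
theorem nontrivialSets_linked [Finite X] (hX : Nat.card X ≤ 3) :
    (nontrivialSets : Upfamily X).Linked := by
  intro A hA B hB
  by_contra hAB
  rw [not_nonempty_iff_eq_empty, ← disjoint_iff_inter_eq_empty] at hAB
  have hA2 := (one_lt_ncard_iff_nontrivial (s := A)).2 hA
  have hB2 := (one_lt_ncard_iff_nontrivial (s := B)).2 hB
  have hAB_card := ncard_union_eq hAB
  have hX_card := ncard_le_card (A ∪ B)
  omega

theorem nontrivialSets_isMaxLinked [Finite X] (hX : Nat.card X = 3) :
    (nontrivialSets : Upfamily X).IsMaxLinked := by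
  refine ⟨nontrivialSets_linked hX.le, fun G hG hsub => ext fun A => ⟨fun hA => hsub hA, ?_⟩⟩
  intro hA
  obtain ⟨x, rfl⟩ | hA2 := (G.nonempty_of_mem hA).exists_eq_singleton_or_nontrivial
  · have hcompl : ({x}ᶜ : Set X).Nontrivial := by
      rw [← one_lt_ncard_iff_nontrivial, ncard_compl, ncard_singleton, hX]
      omega
    obtain ⟨y, hyx, hyx'⟩ := hG _ hA _ (hsub hcompl)
    exact absurd hyx hyx'
  · exact hA2

theorem IsMaxLinked.eq_principal_or_eq_nontrivialSets [Finite X] (hX : Nat.card X ≤ 3)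
    {F : Upfamily X} (hF : F.IsMaxLinked) : (∃ x, F = principal x) ∨ F = nontrivialSets := by
  by_cases hsingleton : ∃ x, {x} ∈ F.1
  · obtain ⟨x, hx⟩ := hsingleton
    exact Or.inl ⟨x, hF.eq_principal hx⟩
  · refine Or.inr (hF.2 _ (nontrivialSets_linked hX) fun A hA => ?_)
    obtain ⟨x, rfl⟩ | hA2 := (F.nonempty_of_mem hA).exists_eq_singleton_or_nontrivial
    · exact absurd ⟨x, hA⟩ hsingleton
    · exact hA2

theorem lambdaS_eq_of_card_eq_three [Finite X] (hX : Nat.card X = 3) :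
    lambdaS X = insert nontrivialSets (range principal) := by
  ext F
  constructor
  · intro hF
    rcases hF.eq_principal_or_eq_nontrivialSets hX.le with ⟨x, rfl⟩ | rfl
    · exact Or.inr ⟨x, rfl⟩
    · exact Or.inl rfl
  · rintro (rfl | ⟨x, rfl⟩)
    · exact nontrivialSets_isMaxLinked hX
    · exact principal_isMaxLinked x

variable [Mul X]

theorem principal_mul_nontrivialSets {g : X} (hg : Function.Bijective (g * ·)) :
    principal g * nontrivialSets = nontrivialSets := by
  ext C
  exact mem_principal_mul.trans hg.nontrivial_preimage_iff

theorem nontrivialSets_mul_principal {g : X} (hg : Function.Bijective (· * g)) :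
    nontrivialSets * principal g = nontrivialSets := by
  ext C
  exact mem_mul_principal.trans hg.nontrivial_preimage_iff

theorem nontrivialSets_mul_self {U : Set X} (hU : U.Nontrivial)
    (hUbij : ∀ u ∈ U, Function.Bijective (u * ·)) (hUc : Uᶜ.Subsingleton) :
    nontrivialSets * nontrivialSets = (nontrivialSets : Upfamily X) := by
  ext C
  rw [mem_mul]
  constructor
  · rintro ⟨A, hA, hAC⟩
    obtain ⟨u, huA, huU⟩ : (A ∩ U).Nonempty := by
      by_contra hAU
      exact hA.not_subsingleton (hUc.anti fun a ha haU => hAU ⟨a, ha, haU⟩)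
    exact (hUbij u huU).nontrivial_preimage_iff.1 (hAC u huA)
  · exact fun hC => ⟨U, hU, fun u hu => (hUbij u hu).nontrivial_preimage_iff.2 hC⟩

end NontrivialSets

end Upfamily

namespace OSum

variable {A B : Type*}

instance [Nontrivial B] : Nontrivial (OSum A B) :=
  Sum.inr_injective.nontrivial

section Mul

variable [Mul A] [Mul B]

@[simp]
theorem inl_mul_inl (a a' : A) : (Sum.inl a : OSum A B) * Sum.inl a' = Sum.inl (a * a') := rfl

@[simp]
theorem inl_mul_inr (a : A) (b : B) : (Sum.inl a : OSum A B) * Sum.inr b = Sum.inl a := rfl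

@[simp]
theorem inr_mul_inl (b : B) (a : A) : (Sum.inr b : OSum A B) * Sum.inl a = Sum.inl a := rfl

@[simp]
theorem inr_mul_inr (b b' : B) : (Sum.inr b : OSum A B) * Sum.inr b' = Sum.inr (b * b') := rfl

theorem inl_mul_of_forall_mul_eq {a : A} (ha : ∀ a', a * a' = a) (w : OSum A B) :
    Sum.inl a * w = Sum.inl a := by
  rcases w with a' | b <;> simp [ha]

theorem mul_inl_of_forall_mul_eq {a : A} (ha : ∀ a', a' * a = a) (w : OSum A B) :
    w * Sum.inl a = Sum.inl a := by
  rcases w with a' | b <;> simp [ha]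

end Mul

variable [Mul A] [Group B]

theorem bijective_inr_mul (g : B) : Function.Bijective fun w : OSum A B => Sum.inr g * w :=
  Function.bijective_iff_has_inverse.2
    ⟨fun w => Sum.inr g⁻¹ * w, by rintro (a | b) <;> simp, by rintro (a | b) <;> simp⟩

theorem bijective_mul_inr (g : B) : Function.Bijective fun w : OSum A B => w * Sum.inr g :=
  Function.bijective_iff_has_inverse.2
    ⟨fun w => w * Sum.inr g⁻¹, by rintro (a | b) <;> simp, by rintro (a | b) <;> simp⟩

theorem nontrivialSets_mul_self [Subsingleton A] [Nontrivial B] :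
    (Upfamily.nontrivialSets : Upfamily (OSum A B)) * Upfamily.nontrivialSets =
      Upfamily.nontrivialSets := by
  refine Upfamily.nontrivialSets_mul_self (U := range Sum.inr) ?_ ?_ ?_
  · rw [← image_univ]
    exact nontrivial_univ.image Sum.inr_injective
  · rintro _ ⟨g, rfl⟩
    exact bijective_inr_mul g
  · rw [compl_range_inr]
    exact subsingleton_range _

end OSum

instance : Unique (L 1) := inferInstanceAs (Unique (Fin 1))

theorem card_oSum_L_one_Cgrp_two : Nat.card (OSum (L 1) (Cgrp 2)) = 3 := by
  rw [Nat.card_sum, Nat.card_unique, Nat.card_eq_fintype_card, Fintype.card_multiplicative,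
    ZMod.card]

open Upfamily

def toSuperextension : OSum (L 1) (OSum (L 1) (Cgrp 2)) → Upfamily (OSum (L 1) (Cgrp 2))
  | Sum.inl a => principal (Sum.inl a)
  | Sum.inr (Sum.inl _) => nontrivialSets
  | Sum.inr (Sum.inr g) => principal (Sum.inr g)

theorem toSuperextension_injective : Function.Injective toSuperextension := by
  rintro (a | b | g) (a' | b' | g') h
  · exact congrArg Sum.inl (Sum.inl_injective (principal_injective h))
  · exact absurd h (principal_ne_nontrivialSets _)
  · exact absurd (principal_injective h) Sum.inl_ne_inr
  · exact absurd h.symm (principal_ne_nontrivialSets _)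
  · exact congrArg (Sum.inr ∘ Sum.inl) (Subsingleton.elim b b')
  · exact absurd h.symm (principal_ne_nontrivialSets _)
  · exact absurd (principal_injective h) Sum.inr_ne_inl
  · exact absurd h (principal_ne_nontrivialSets _)
  · exact congrArg (Sum.inr ∘ Sum.inr) (Sum.inr_injective (principal_injective h))

theorem range_toSuperextension : range toSuperextension = lambdaS (OSum (L 1) (Cgrp 2)) := by
  rw [lambdaS_eq_of_card_eq_three card_oSum_L_one_Cgrp_two]
  ext F
  constructor
  · rintro ⟨a | b | g, rfl⟩
    · exact Or.inr ⟨_, rfl⟩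
    · exact Or.inl rfl
    · exact Or.inr ⟨_, rfl⟩
  · rintro (rfl | ⟨a | g, rfl⟩)
    · exact ⟨Sum.inr (Sum.inl default), rfl⟩
    · exact ⟨Sum.inl a, rfl⟩
    · exact ⟨Sum.inr (Sum.inr g), rfl⟩

theorem toSuperextension_mul (w w' : OSum (L 1) (OSum (L 1) (Cgrp 2))) :
    toSuperextension (w * w') = toSuperextension w * toSuperextension w' := by
  have inl_mul (a : L 1) (F : Upfamily (OSum (L 1) (Cgrp 2))) :
      principal (Sum.inl a) * F = principal (Sum.inl a) :=
    principal_mul_of_forall_mul_eq (OSum.inl_mul_of_forall_mul_eq fun _ => Subsingleton.elim _ _) F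
  have mul_inl (a : L 1) (F : Upfamily (OSum (L 1) (Cgrp 2))) :
      F * principal (Sum.inl a) = principal (Sum.inl a) :=
    mul_principal_of_forall_mul_eq (OSum.mul_inl_of_forall_mul_eq fun _ => Subsingleton.elim _ _) F
  rcases w with a | b | g <;> rcases w' with a' | b' | g'
  · exact (principal_mul_principal (Sum.inl a) (Sum.inl a')).symm
  · exact (inl_mul a _).symm
  · exact (principal_mul_principal (Sum.inl a) (Sum.inr g')).symm
  · exact (mul_inl a' _).symm
  · exact OSum.nontrivialSets_mul_self.symm
  · exact (nontrivialSets_mul_principal (OSum.bijective_mul_inr g')).symm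
  · exact (principal_mul_principal (Sum.inr g) (Sum.inl a')).symm
  · exact (principal_mul_nontrivialSets (OSum.bijective_inr_mul g)).symm
  · exact (principal_mul_principal (Sum.inr g) (Sum.inr g')).symm

/-- Proposition 4.1(5): `λ(L₁ ⊔ C₂) ≅ L₁ ⊔ L₁ ⊔ C₂`. -/
theorem superextension_L1C2 :
    MulIsoOnto (OSum (L 1) (OSum (L 1) (Cgrp 2))) (lambdaS (OSum (L 1) (Cgrp 2))) :=
  ⟨toSuperextension, toSuperextension_injective, range_toSuperextension, toSuperextension_mul⟩
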